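/- Let m ≥ 1 be an integer and let Λ_m be the 4×4 real matrix Λ_m = (π/2)·[[0, −m√3, 0, 0], [m√3, 0, −2m, 0], [0, 2m, 0, −m√3], [0, 0, m√3, 0]]. Then for all t ∈ ℝ, the first column of the matrix exponential exp(tΛ_m) equals ( (1/4)cos(3πmt/2) + (3/4)cos(πmt/2), (√3/4)sin(3πmt/2) + (√3/4)sin(πmt/2), (√3/4)cos(πmt/2) − (√3/4)cos(3πmt/2), (3/4)sin(πmt/2) − (1/4)sin(3πmt/2) ). -/

import Mathlib

open Real

/-- The constant logarithmic derivative
`Λ_m = (π/2)·[[0, −m√3, 0, 0], [m√3, 0, −2m, 0], [0, 2m, 0, −m√3], [0, 0, m√3, 0]]`. -/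
noncomputable def LamM (m : ℕ) : Matrix (Fin 4) (Fin 4) ℝ :=
  (π / 2) • !![0, -((m : ℝ) * Real.sqrt 3), 0, 0;
               (m : ℝ) * Real.sqrt 3, 0, -(2 * (m : ℝ)), 0;
               0, 2 * (m : ℝ), 0, -((m : ℝ) * Real.sqrt 3);
               0, 0, (m : ℝ) * Real.sqrt 3, 0]

/-!
Since `Λ_m = m Λ_1`, it suffices to compute `exp(θ Λ_1) e₁`. The vector `e₁` splits as
`a + c` with `a = (3/4, 0, √3/4, 0)` and `c = (1/4, 0, -√3/4, 0)`, and `Λ_1` acts on the planes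
`⟨a, b⟩` and `⟨c, d⟩` (with `b = (0, √3/4, 0, 3/4)`, `d = (0, √3/4, 0, -1/4)`) as infinitesimal
rotations of speed `π/2` and `3π/2`. On such a plane `exp(θ N)` is the rotation by `ω θ`: the
rotation curve `G` solves `G' = N G`, and then `exp(-θ N) G(θ)` has derivative zero.
-/

open NormedSpace Matrix

section ExpRotation

variable {𝔸 : Type*} [NormedRing 𝔸] [NormedAlgebra ℝ 𝔸] [CompleteSpace 𝔸]

theorem exp_smul_neg_mul_eq_of_hasDerivAt {N : 𝔸} {G : ℝ → 𝔸}
    (hG : ∀ u, HasDerivAt G (N * G u) u) (θ : ℝ) : exp (θ • -N) * G θ = G 0 := by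
  have hderiv : ∀ u : ℝ, HasDerivAt (fun v : ℝ => exp (v • -N) * G v) 0 u := fun u =>
    ((hasDerivAt_exp_smul_const (-N) u).mul (hG u)).congr_deriv (by noncomm_ring)
  simpa using is_const_of_deriv_eq_zero (fun v => (hderiv v).differentiableAt)
    (fun v => (hderiv v).deriv) θ 0

theorem exp_smul_mul_eq_of_hasDerivAt {N : 𝔸} {G : ℝ → 𝔸}
    (hG : ∀ u, HasDerivAt G (N * G u) u) (θ : ℝ) : exp (θ • N) * G 0 = G θ := by
  have hinv : exp (θ • N) * exp (θ • -N) = 1 := by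
    simpa using exp_smul_neg_mul_eq_of_hasDerivAt (N := -N)
      (fun u => hasDerivAt_exp_smul_const' (-N) u) θ
  rw [← exp_smul_neg_mul_eq_of_hasDerivAt hG θ, ← mul_assoc, hinv, one_mul]

theorem exp_smul_mul_eq_cos_add_sin {N A B : 𝔸} {ω : ℝ} (hA : N * A = ω • B)
    (hB : N * B = -ω • A) (θ : ℝ) :
    exp (θ • N) * A = cos (ω * θ) • A + sin (ω * θ) • B := by
  have hG : ∀ u : ℝ, HasDerivAt (fun v => cos (ω * v) • A + sin (ω * v) • B)
      (N * (cos (ω * u) • A + sin (ω * u) • B)) u := by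
    intro u
    have hω : HasDerivAt (fun v => ω * v) ω u := by simpa using (hasDerivAt_id u).const_mul ω
    refine ((((hasDerivAt_cos _).comp u hω).smul_const A).add
      (((hasDerivAt_sin _).comp u hω).smul_const B)).congr_deriv ?_
    rw [mul_add, mul_smul_comm, mul_smul_comm, hA, hB]
    module
  simpa using exp_smul_mul_eq_of_hasDerivAt hG θ

end ExpRotation

theorem Matrix.exp_smul_mulVec_eq_cos_add_sin {n : Type*} [Fintype n] [DecidableEq n]
    {N : Matrix n n ℝ} {a b : n → ℝ} {ω : ℝ} (ha : N *ᵥ a = ω • b) (hb : N *ᵥ b = -ω • a)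
    (θ : ℝ) : exp (θ • N) *ᵥ a = cos (ω * θ) • a + sin (ω * θ) • b := by
  let := Matrix.linftyOpNormedRing (n := n) (α := ℝ)
  let := Matrix.linftyOpNormedAlgebra (R := ℝ) (n := n) (α := ℝ)
  -- `a` is recovered from the matrix `vecMulVec a 1`, all of whose columns are `a`.
  have h := exp_smul_mul_eq_cos_add_sin (N := N) (A := vecMulVec a 1) (B := vecMulVec b 1)
    (by rw [mul_vecMulVec, ha, smul_vecMulVec]) (by rw [mul_vecMulVec, hb, smul_vecMulVec]) θ
  rw [mul_vecMulVec, ← smul_vecMulVec, ← smul_vecMulVec, ← add_vecMulVec] at h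
  have hcol : ∀ x y : n → ℝ, vecMulVec x 1 = vecMulVec y 1 → x = y := fun x y hxy =>
    funext fun i => by simpa using congrFun (congrFun hxy i) i
  exact hcol _ _ h

theorem LamM_eq_smul (m : ℕ) : LamM m = (m : ℝ) • LamM 1 := by
  ext i j
  fin_cases i <;> fin_cases j <;> simp [LamM] <;> ring

theorem exp_smul_LamM_one_mulVec_slow (θ : ℝ) :
    exp (θ • LamM 1) *ᵥ ![3 / 4, 0, √3 / 4, 0]
      = cos (π / 2 * θ) • ![3 / 4, 0, √3 / 4, 0] + sin (π / 2 * θ) • ![0, √3 / 4, 0, 3 / 4] :=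
  exp_smul_mulVec_eq_cos_add_sin
    (by ext i; fin_cases i <;> simp [LamM, mulVec, dotProduct, Fin.sum_univ_four] <;>
      grind [Real.mul_self_sqrt])
    (by ext i; fin_cases i <;> simp [LamM, mulVec, dotProduct, Fin.sum_univ_four] <;>
      grind [Real.mul_self_sqrt]) θ

theorem exp_smul_LamM_one_mulVec_fast (θ : ℝ) :
    exp (θ • LamM 1) *ᵥ ![1 / 4, 0, -(√3 / 4), 0]
      = cos (3 * π / 2 * θ) • ![1 / 4, 0, -(√3 / 4), 0]
        + sin (3 * π / 2 * θ) • ![0, √3 / 4, 0, -(1 / 4)] :=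
  exp_smul_mulVec_eq_cos_add_sin
    (by ext i; fin_cases i <;> simp [LamM, mulVec, dotProduct, Fin.sum_univ_four] <;>
      grind [Real.mul_self_sqrt])
    (by ext i; fin_cases i <;> simp [LamM, mulVec, dotProduct, Fin.sum_univ_four] <;>
      grind [Real.mul_self_sqrt]) θ

theorem stmt_13_general (m : ℕ) :
    ∀ t : ℝ,
      (fun i : Fin 4 => NormedSpace.exp (t • LamM m) i 0)
        = ![1 / 4 * Real.cos (3 * π * (m : ℝ) * t / 2) + 3 / 4 * Real.cos (π * (m : ℝ) * t / 2),
            Real.sqrt 3 / 4 * Real.sin (3 * π * (m : ℝ) * t / 2)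
              + Real.sqrt 3 / 4 * Real.sin (π * (m : ℝ) * t / 2),
            Real.sqrt 3 / 4 * Real.cos (π * (m : ℝ) * t / 2)
              - Real.sqrt 3 / 4 * Real.cos (3 * π * (m : ℝ) * t / 2),
            3 / 4 * Real.sin (π * (m : ℝ) * t / 2)
              - 1 / 4 * Real.sin (3 * π * (m : ℝ) * t / 2)] := by
  intro t
  have hcol : (fun i : Fin 4 => exp (t • LamM m) i 0)
      = exp ((t * m) • LamM 1) *ᵥ Pi.single 0 1 := by
    rw [LamM_eq_smul, smul_smul, mulVec_single_one]
    rfl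
  have he₁ : (Pi.single 0 1 : Fin 4 → ℝ)
      = ![3 / 4, 0, √3 / 4, 0] + ![1 / 4, 0, -(√3 / 4), 0] := by
    ext i; fin_cases i <;> norm_num [Pi.single_apply]
  rw [hcol, he₁, mulVec_add, exp_smul_LamM_one_mulVec_slow, exp_smul_LamM_one_mulVec_fast]
  ext i
  fin_cases i <;> simp <;> ring_nf

/-- For every `m ≥ 1` and `t ∈ ℝ`, the first column of the matrix
exponential `exp(tΛ_m)` is the curve `γ₁^m(t)` given by the explicit trigonometric
formula below. -/
theorem stmt_13 (m : ℕ) (hm : 1 ≤ m) :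
    ∀ t : ℝ,
      (fun i : Fin 4 => NormedSpace.exp (t • LamM m) i 0)
        = ![1 / 4 * Real.cos (3 * π * (m : ℝ) * t / 2) + 3 / 4 * Real.cos (π * (m : ℝ) * t / 2),
            Real.sqrt 3 / 4 * Real.sin (3 * π * (m : ℝ) * t / 2)
              + Real.sqrt 3 / 4 * Real.sin (π * (m : ℝ) * t / 2),
            Real.sqrt 3 / 4 * Real.cos (π * (m : ℝ) * t / 2)
              - Real.sqrt 3 / 4 * Real.cos (3 * π * (m : ℝ) * t / 2),
            3 / 4 * Real.sin (π * (m : ℝ) * t / 2)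
              - 1 / 4 * Real.sin (3 * π * (m : ℝ) * t / 2)] :=
  stmt_13_general m
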